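/- Let ε₀ > 0 satisfy E[N₁] ≥ ε₀ I_d and let ε ∈ (0, ε₀/2). Then the sequence of d×d matrices defined by L_0^ε = O and L_{k+1}^ε = E[N₁ + A₁ᵀ π(L_k^ε) A₁] − ε I_d is monotone increasing in the Loewner order: L_k^ε ≤ L_{k+1}^ε for all k ≥ 0. -/

import Mathlib

/-!
Write `F(X) = E[N₁ + A₁ᵀ X A₁] − ε I`, so that `L_{k+1} = F(π(L_k))`. Since `E[N₁] ≥ ε₀ I` and
`A₁ᵀ X A₁ ≥ 0` for `X ≥ 0`, we get `F(X) ≥ (ε₀ − ε) I > 0` for every `X ≥ 0`, and `F` is monotone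
because congruence by `A₁` and expectation are. Completing the square gives
`xᵀ π(P) x = min_y [x; y]ᵀ P [x; y]` for `P > 0`, so `π` sends positive definite matrices to
positive semidefinite ones and is monotone on them. Hence every `L_{k+1}` is positive definite, and
`L_k ≤ L_{k+1}` follows by induction, starting from `π(L_0) = 0 ≤ π(L_1)`.
-/

open MeasureTheory Matrix Filter ProbabilityTheory
open scoped ENNReal NNReal

noncomputable section

instance matrixMeasurableSpace {I J : Type*} : MeasurableSpace (Matrix I J ℝ) :=
  inferInstanceAs (MeasurableSpace (I → J → ℝ))

/-- The Schur-complement map `π(P) = P_xx − P_xu P_uu⁻¹ P_ux`. -/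
def piMap {n m : ℕ} (P : Matrix (Fin n ⊕ Fin m) (Fin n ⊕ Fin m) ℝ) :
    Matrix (Fin n) (Fin n) ℝ :=
  P.toBlocks₁₁ - P.toBlocks₁₂ * P.toBlocks₂₂⁻¹ * P.toBlocks₂₁

/-- The feedback-gain map `Γ(P) = −P_uu⁻¹ P_ux`. -/
def gammaMap {n m : ℕ} (P : Matrix (Fin n ⊕ Fin m) (Fin n ⊕ Fin m) ℝ) :
    Matrix (Fin m) (Fin n) ℝ :=
  -(P.toBlocks₂₂⁻¹ * P.toBlocks₂₁)

/-- Loewner order: `X ≤ Y` iff `Y - X` is positive semidefinite. -/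
def loewnerLE {I : Type*} [Fintype I] (X Y : Matrix I I ℝ) : Prop :=
  (Y - X).PosSemidef

/-- Spectral norm (`2`-norm) of a real matrix. -/
def specNorm {I J : Type*} [Fintype I] [Fintype J] [DecidableEq J]
    (M : Matrix I J ℝ) : ℝ :=
  ‖LinearMap.toContinuousLinearMap (Matrix.toEuclideanLin M)‖

/-- Entrywise expectation of a random matrix. -/
def matExp {Ω : Type*} [MeasurableSpace Ω] (μpr : Measure Ω) {I J : Type*}
    (M : Ω → Matrix I J ℝ) : Matrix I J ℝ :=
  Matrix.of fun i j => ∫ ω, M ω i j ∂μpr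

section LQ

variable {n m : ℕ} {Ω : Type*} [MeasurableSpace Ω]

/-- The filtration `𝓕_t = σ(A_s, N_s : 1 ≤ s ≤ t)` (with `𝓕_0` trivial). -/
def lqFiltration (A : ℕ → Ω → Matrix (Fin n) (Fin n ⊕ Fin m) ℝ)
    (N : ℕ → Ω → Matrix (Fin n ⊕ Fin m) (Fin n ⊕ Fin m) ℝ) :
    ℕ → MeasurableSpace Ω := fun t =>
  ⨆ s ∈ Finset.Icc 1 t, MeasurableSpace.comap (fun ω => (A s ω, N s ω)) inferInstance

/-- A control is admissible if it is adapted to the filtration. -/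
def Admissible {k : ℕ} (F : ℕ → MeasurableSpace Ω) (u : ℕ → Ω → Fin k → ℝ) : Prop :=
  ∀ t, @Measurable Ω (Fin k → ℝ) (F t) _ (u t)

/-- The state process `x_0 = x`, `x_{t+1} = A_{t+1} [x_t; u_t]`. -/
def statePath (A : ℕ → Ω → Matrix (Fin n) (Fin n ⊕ Fin m) ℝ)
    (x : Fin n → ℝ) (u : ℕ → Ω → Fin m → ℝ) : ℕ → Ω → Fin n → ℝ
  | 0 => fun _ => x
  | t + 1 => fun ω => A (t + 1) ω *ᵥ Sum.elim (statePath A x u t ω) (u t ω)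

/-- The stage cost `[x_tᵀ, u_tᵀ] N_{t+1} [x_t; u_t]`. -/
def stageCost (A : ℕ → Ω → Matrix (Fin n) (Fin n ⊕ Fin m) ℝ)
    (N : ℕ → Ω → Matrix (Fin n ⊕ Fin m) (Fin n ⊕ Fin m) ℝ)
    (x : Fin n → ℝ) (u : ℕ → Ω → Fin m → ℝ) (t : ℕ) (ω : Ω) : ℝ :=
  Sum.elim (statePath A x u t ω) (u t ω) ⬝ᵥ
    (N (t + 1) ω *ᵥ Sum.elim (statePath A x u t ω) (u t ω))

/-- The total cost `J(x, u) ∈ [0,∞]`. -/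
def costJ (A : ℕ → Ω → Matrix (Fin n) (Fin n ⊕ Fin m) ℝ)
    (N : ℕ → Ω → Matrix (Fin n ⊕ Fin m) (Fin n ⊕ Fin m) ℝ)
    (x : Fin n → ℝ) (u : ℕ → Ω → Fin m → ℝ) (ω : Ω) : ℝ≥0∞ :=
  ∑' t, ENNReal.ofReal (stageCost A N x u t ω)

/-- The value function `V(x) = inf over admissible u of E[J(x,u)]`. -/
def valueV (μpr : Measure Ω) (A : ℕ → Ω → Matrix (Fin n) (Fin n ⊕ Fin m) ℝ)
    (N : ℕ → Ω → Matrix (Fin n ⊕ Fin m) (Fin n ⊕ Fin m) ℝ)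
    (x : Fin n → ℝ) : ℝ≥0∞ :=
  ⨅ (u : ℕ → Ω → Fin m → ℝ) (_ : Admissible (lqFiltration A N) u),
    ∫⁻ ω, costJ A N x u ω ∂μpr

/-- The Riccati iteration `K_0 = O`, `K_{t+1} = π(E[N₁ + A₁ᵀ K_t A₁])`. -/
def Kseq (μpr : Measure Ω) (A : ℕ → Ω → Matrix (Fin n) (Fin n ⊕ Fin m) ℝ)
    (N : ℕ → Ω → Matrix (Fin n ⊕ Fin m) (Fin n ⊕ Fin m) ℝ) :
    ℕ → Matrix (Fin n) (Fin n) ℝ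
  | 0 => 0
  | t + 1 => piMap (matExp μpr (fun ω => N 1 ω + (A 1 ω)ᵀ * Kseq μpr A N t * A 1 ω))

/-- The Q-learning process of Algorithm 1. -/
def Qproc (A : ℕ → Ω → Matrix (Fin n) (Fin n ⊕ Fin m) ℝ)
    (N : ℕ → Ω → Matrix (Fin n ⊕ Fin m) (Fin n ⊕ Fin m) ℝ)
    (α : ℕ → Ω → ℝ) (Q0 : Matrix (Fin n ⊕ Fin m) (Fin n ⊕ Fin m) ℝ) :
    ℕ → Ω → Matrix (Fin n ⊕ Fin m) (Fin n ⊕ Fin m) ℝ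
  | 0 => fun _ => Q0
  | t + 1 => fun ω =>
      Qproc A N α Q0 t ω + α t ω •
        (N (t + 1) ω + (A (t + 1) ω)ᵀ * piMap (Qproc A N α Q0 t ω) * A (t + 1) ω
          - Qproc A N α Q0 t ω)

end LQ

/-- The lower-bound iteration `L_0^ε = O`, `L_{k+1}^ε = E[N₁ + A₁ᵀ π(L_k^ε) A₁] − ε I_d`. -/
def Lseq {n m : ℕ} {Ω : Type*} [MeasurableSpace Ω] (μpr : Measure Ω)
    (A : ℕ → Ω → Matrix (Fin n) (Fin n ⊕ Fin m) ℝ)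
    (N : ℕ → Ω → Matrix (Fin n ⊕ Fin m) (Fin n ⊕ Fin m) ℝ) (ε : ℝ) :
    ℕ → Matrix (Fin n ⊕ Fin m) (Fin n ⊕ Fin m) ℝ
  | 0 => 0
  | k + 1 =>
      matExp μpr (fun ω => N 1 ω + (A 1 ω)ᵀ * piMap (Lseq μpr A N ε k) * A 1 ω) - ε • 1


section Loewner

variable {I : Type*} [Fintype I]

lemma loewnerLE_trans {X Y Z : Matrix I I ℝ} (hXY : loewnerLE X Y) (hYZ : loewnerLE Y Z) :
    loewnerLE X Z := by
  simpa only [loewnerLE, sub_add_sub_cancel] using hYZ.add hXY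

lemma loewnerLE_add_right {M P : Matrix I I ℝ} (hP : P.PosSemidef) : loewnerLE M (M + P) := by
  simpa only [loewnerLE, add_sub_cancel_left] using hP

lemma loewnerLE_transpose_mul_mul {J : Type*} [Fintype J] {X Y : Matrix J J ℝ}
    (hXY : loewnerLE X Y) (B : Matrix J I ℝ) : loewnerLE (Bᵀ * X * B) (Bᵀ * Y * B) := by
  simpa only [loewnerLE, Matrix.mul_sub, Matrix.sub_mul, conjTranspose_eq_transpose_of_trivial]
    using hXY.conjTranspose_mul_mul_same B

lemma loewnerLE.dotProduct_mulVec_le {X Y : Matrix I I ℝ} (hXY : loewnerLE X Y) (v : I → ℝ) :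
    v ⬝ᵥ (X *ᵥ v) ≤ v ⬝ᵥ (Y *ᵥ v) := by
  simpa only [star_trivial, sub_mulVec, dotProduct_sub, sub_nonneg]
    using hXY.dotProduct_mulVec_nonneg v

lemma posDef_sub_smul_one_of_loewnerLE [DecidableEq I] {M : Matrix I I ℝ} {c ε : ℝ}
    (hM : loewnerLE (c • 1) M) (hε : ε < c) : (M - ε • 1).PosDef := by
  have hpd : ((c - ε) • (1 : Matrix I I ℝ)).PosDef := by
    rw [smul_one_eq_diagonal]
    exact PosDef.diagonal fun _ => sub_pos.2 hε
  convert hpd.add_posSemidef hM using 1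
  rw [sub_smul]
  abel

end Loewner

section MatExp

variable {Ω : Type*} [MeasurableSpace Ω] {μ : Measure Ω} {I : Type*}

lemma matExp_add {J : Type*} {f g : Ω → Matrix I J ℝ}
    (hf : ∀ i j, Integrable (fun ω => f ω i j) μ) (hg : ∀ i j, Integrable (fun ω => g ω i j) μ) :
    matExp μ (fun ω => f ω + g ω) = matExp μ f + matExp μ g := by
  ext i j
  exact integral_add (hf i j) (hg i j)

lemma matExp_sub {J : Type*} {f g : Ω → Matrix I J ℝ}
    (hf : ∀ i j, Integrable (fun ω => f ω i j) μ) (hg : ∀ i j, Integrable (fun ω => g ω i j) μ) :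
    matExp μ (fun ω => f ω - g ω) = matExp μ f - matExp μ g := by
  ext i j
  exact integral_sub (hf i j) (hg i j)

lemma matExp_isHermitian {f : Ω → Matrix I I ℝ} (hf : ∀ ω, (f ω).IsHermitian) :
    (matExp μ f).IsHermitian :=
  IsHermitian.ext fun i j => by
    simp only [matExp, of_apply, star_trivial]
    exact congrArg _ (funext fun ω => (hf ω).apply i j)

variable [Fintype I]

lemma dotProduct_matExp_mulVec {f : Ω → Matrix I I ℝ}
    (hf : ∀ i j, Integrable (fun ω => f ω i j) μ) (x : I → ℝ) :
    x ⬝ᵥ (matExp μ f *ᵥ x) = ∫ ω, x ⬝ᵥ (f ω *ᵥ x) ∂μ := by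
  have hint : ∀ i j, Integrable (fun ω => x i * (f ω i j * x j)) μ :=
    fun i j => ((hf i j).mul_const _).const_mul _
  simp only [dotProduct, mulVec, Finset.mul_sum]
  rw [integral_finsetSum _ fun i _ => integrable_finsetSum _ fun j _ => hint i j]
  refine Finset.sum_congr rfl fun i _ => ?_
  rw [integral_finsetSum _ fun j _ => hint i j]
  simp only [matExp, of_apply, integral_const_mul, integral_mul_const]

lemma matExp_posSemidef {f : Ω → Matrix I I ℝ} (hf_psd : ∀ ω, (f ω).PosSemidef)
    (hf : ∀ i j, Integrable (fun ω => f ω i j) μ) : (matExp μ f).PosSemidef :=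
  .of_dotProduct_mulVec_nonneg (matExp_isHermitian fun ω => (hf_psd ω).1) fun x => by
    rw [star_trivial, dotProduct_matExp_mulVec hf]
    refine integral_nonneg fun ω => ?_
    simpa only [star_trivial, Pi.zero_apply] using (hf_psd ω).dotProduct_mulVec_nonneg x

lemma matExp_mono {f g : Ω → Matrix I I ℝ}
    (hf : ∀ i j, Integrable (fun ω => f ω i j) μ) (hg : ∀ i j, Integrable (fun ω => g ω i j) μ)
    (hfg : ∀ ω, loewnerLE (f ω) (g ω)) : loewnerLE (matExp μ f) (matExp μ g) := by
  rw [loewnerLE, ← matExp_sub hg hf]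
  exact matExp_posSemidef hfg fun i j => (hg i j).sub (hf i j)

end MatExp

section SchurComplement

variable {n m : ℕ} {P Q : Matrix (Fin n ⊕ Fin m) (Fin n ⊕ Fin m) ℝ}

lemma piMap_zero : piMap (0 : Matrix (Fin n ⊕ Fin m) (Fin n ⊕ Fin m) ℝ) = 0 := by
  have h₁₁ : (0 : Matrix (Fin n ⊕ Fin m) (Fin n ⊕ Fin m) ℝ).toBlocks₁₁ = 0 := rfl
  have h₂₁ : (0 : Matrix (Fin n ⊕ Fin m) (Fin n ⊕ Fin m) ℝ).toBlocks₂₁ = 0 := rfl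
  rw [piMap, h₁₁, h₂₁, Matrix.mul_zero, sub_zero]

lemma toBlocks₂₂_posDef (hP : P.PosDef) : P.toBlocks₂₂.PosDef :=
  hP.submatrix Sum.inr_injective

lemma isHermitian_toBlocks_iff :
    P.IsHermitian ↔ P.toBlocks₁₁.IsHermitian ∧ P.toBlocks₁₂ᴴ = P.toBlocks₂₁ ∧
      P.toBlocks₂₁ᴴ = P.toBlocks₁₂ ∧ P.toBlocks₂₂.IsHermitian := by
  rw [← isHermitian_fromBlocks_iff, fromBlocks_toBlocks]

lemma piMap_isHermitian (hP : P.IsHermitian) : (piMap P).IsHermitian := by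
  obtain ⟨h₁₁, h₁₂, -, h₂₂⟩ := isHermitian_toBlocks_iff.1 hP
  rw [piMap, ← h₁₂]
  exact h₁₁.sub (isHermitian_mul_mul_conjTranspose _ h₂₂.inv)

/-- Completing the square in `y`: the minimum over `y` is attained at `y = gammaMap P *ᵥ x`. -/
lemma dotProduct_mulVec_sumElim (hP : P.IsHermitian) [Invertible P.toBlocks₂₂]
    (x : Fin n → ℝ) (y : Fin m → ℝ) :
    Sum.elim x y ⬝ᵥ (P *ᵥ Sum.elim x y) =
      (y - gammaMap P *ᵥ x) ⬝ᵥ (P.toBlocks₂₂ *ᵥ (y - gammaMap P *ᵥ x)) +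
        x ⬝ᵥ (piMap P *ᵥ x) := by
  obtain ⟨-, h₁₂, -, h₂₂⟩ := isHermitian_toBlocks_iff.1 hP
  have key := schur_complement_eq₂₂ P.toBlocks₁₁ P.toBlocks₁₂ x y h₂₂
  simp only [star_trivial, ← dotProduct_mulVec, h₁₂, fromBlocks_toBlocks] at key
  rw [key, piMap, gammaMap, neg_mulVec, sub_neg_eq_add, add_comm y]

lemma dotProduct_mulVec_piMap_eq (hP : P.IsHermitian) [Invertible P.toBlocks₂₂] (x : Fin n → ℝ) :
    x ⬝ᵥ (piMap P *ᵥ x) =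
      Sum.elim x (gammaMap P *ᵥ x) ⬝ᵥ (P *ᵥ Sum.elim x (gammaMap P *ᵥ x)) := by
  rw [dotProduct_mulVec_sumElim hP, sub_self, zero_dotProduct, zero_add]

lemma dotProduct_mulVec_piMap_le (hP : P.IsHermitian) (hP₂₂ : P.toBlocks₂₂.PosDef)
    (x : Fin n → ℝ) (y : Fin m → ℝ) :
    x ⬝ᵥ (piMap P *ᵥ x) ≤ Sum.elim x y ⬝ᵥ (P *ᵥ Sum.elim x y) := by
  have := hP₂₂.isUnit.invertible
  rw [dotProduct_mulVec_sumElim hP, le_add_iff_nonneg_left]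
  simpa only [star_trivial] using hP₂₂.posSemidef.dotProduct_mulVec_nonneg (y - gammaMap P *ᵥ x)

lemma piMap_posSemidef (hP : P.PosDef) : (piMap P).PosSemidef := by
  have := (toBlocks₂₂_posDef hP).isUnit.invertible
  refine .of_dotProduct_mulVec_nonneg (piMap_isHermitian hP.1) fun x => ?_
  rw [star_trivial, dotProduct_mulVec_piMap_eq hP.1]
  simpa only [star_trivial] using hP.posSemidef.dotProduct_mulVec_nonneg _

lemma piMap_mono (hP : P.IsHermitian) (hQ : Q.IsHermitian) (hP₂₂ : P.toBlocks₂₂.PosDef)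
    (hQ₂₂ : Q.toBlocks₂₂.PosDef) (hPQ : loewnerLE P Q) : loewnerLE (piMap P) (piMap Q) := by
  have := hQ₂₂.isUnit.invertible
  refine .of_dotProduct_mulVec_nonneg ((piMap_isHermitian hQ).sub (piMap_isHermitian hP))
    fun x => ?_
  rw [star_trivial, sub_mulVec, dotProduct_sub, sub_nonneg, dotProduct_mulVec_piMap_eq hQ]
  exact (dotProduct_mulVec_piMap_le hP hP₂₂ x _).trans (hPQ.dotProduct_mulVec_le _)

end SchurComplement

theorem loewnerLE_succ_of_eq_piMap {n m : ℕ}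
    {F : Matrix (Fin n) (Fin n) ℝ → Matrix (Fin n ⊕ Fin m) (Fin n ⊕ Fin m) ℝ}
    (hF_posDef : ∀ X, X.PosSemidef → (F X).PosDef)
    (hF_mono : ∀ X Y, loewnerLE X Y → loewnerLE (F X) (F Y))
    {L : ℕ → Matrix (Fin n ⊕ Fin m) (Fin n ⊕ Fin m) ℝ} (hL₀ : L 0 = 0)
    (hL : ∀ k, L (k + 1) = F (piMap (L k))) :
    ∀ k, loewnerLE (L k) (L (k + 1)) := by
  have hpos : ∀ k, (L (k + 1)).PosDef := by
    intro k
    induction k with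
    | zero => rw [hL, hL₀, piMap_zero]; exact hF_posDef 0 .zero
    | succ k ih => rw [hL]; exact hF_posDef _ (piMap_posSemidef ih)
  have hpiMap : ∀ k, loewnerLE (L k) (L (k + 1)) →
      loewnerLE (piMap (L k)) (piMap (L (k + 1))) := by
    rintro (_ | k) h
    · simpa only [loewnerLE, hL₀, piMap_zero, sub_zero] using piMap_posSemidef (hpos 0)
    · exact piMap_mono (hpos k).1 (hpos (k + 1)).1 (toBlocks₂₂_posDef (hpos k))
        (toBlocks₂₂_posDef (hpos (k + 1))) h
  intro k
  induction k with
  | zero => simpa only [loewnerLE, hL₀, sub_zero] using (hpos 0).posSemidef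
  | succ k ih =>
    have := hF_mono _ _ (hpiMap k ih)
    rwa [← hL k, ← hL (k + 1)] at this

section SpectralNorm

open scoped Matrix.Norms.L2Operator

variable {I J : Type*} [Fintype I] [Fintype J] [DecidableEq J]

lemma specNorm_eq_l2_opNorm (M : Matrix I J ℝ) : specNorm M = ‖M‖ := rfl

lemma specNorm_nonneg (M : Matrix I J ℝ) : 0 ≤ specNorm M := norm_nonneg _

lemma abs_apply_le_specNorm (M : Matrix I J ℝ) (i : I) (j : J) : |M i j| ≤ specNorm M := by
  set v := (EuclideanSpace.equiv I ℝ).symm (M *ᵥ EuclideanSpace.single j 1)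
  have hv : v i = M i j := by simp [v]
  calc |M i j| = ‖v i‖ := by rw [hv, Real.norm_eq_abs]
    _ ≤ ‖v‖ := PiLp.norm_apply_le v i
    _ ≤ ‖M‖ * ‖EuclideanSpace.single j (1 : ℝ)‖ := l2_opNorm_mulVec M _
    _ = specNorm M := by rw [PiLp.norm_single, norm_one, mul_one]; rfl

lemma specNorm_transpose_mul_mul_le [DecidableEq I] (B : Matrix I J ℝ) (X : Matrix I I ℝ) :
    specNorm (Bᵀ * X * B) ≤ specNorm X * specNorm (Bᵀ * B) := by
  simp only [specNorm_eq_l2_opNorm, ← conjTranspose_eq_transpose_of_trivial,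
    l2_opNorm_conjTranspose_mul_self]
  calc ‖Bᴴ * X * B‖ ≤ ‖Bᴴ‖ * ‖X‖ * ‖B‖ :=
        (l2_opNorm_mul _ _).trans (mul_le_mul_of_nonneg_right (l2_opNorm_mul _ _) (norm_nonneg _))
    _ = ‖X‖ * (‖B‖ * ‖B‖) := by rw [l2_opNorm_conjTranspose]; ring

end SpectralNorm

section RiccatiOperator

variable {Ω : Type*} [MeasurableSpace Ω] {μ : Measure Ω} {I p : Type*} [Fintype I] [Fintype p]

lemma integrable_apply_of_specNorm_le {J : Type*} [Fintype J] [DecidableEq J]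
    {f : Ω → Matrix I J ℝ} (hf : Measurable f) {g : Ω → ℝ} (hg : Integrable g μ)
    (hfg : ∀ ω, specNorm (f ω) ≤ g ω) (i : I) (j : J) : Integrable (fun ω => f ω i j) μ :=
  hg.mono' (hf.eval.eval).aestronglyMeasurable
    (.of_forall fun ω => (abs_apply_le_specNorm _ i j).trans (hfg ω))

lemma measurable_transpose_mul_mul {A : Ω → Matrix p I ℝ} (hA : Measurable A)
    (X : Matrix p p ℝ) : Measurable fun ω => (A ω)ᵀ * X * A ω := by
  -- `matrixMeasurableSpace` is the product σ-algebra, which is Borel for the product topology.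
  have : BorelSpace (Matrix p I ℝ) := inferInstanceAs (BorelSpace (p → I → ℝ))
  have : BorelSpace (Matrix I I ℝ) := inferInstanceAs (BorelSpace (I → I → ℝ))
  have hcont : Continuous fun M : Matrix p I ℝ => Mᵀ * X * M :=
    ((continuous_id.matrix_transpose).matrix_mul continuous_const).matrix_mul continuous_id
  exact hcont.measurable.comp hA

def riccatiStep [DecidableEq I] (μ : Measure Ω) (A : Ω → Matrix p I ℝ) (N : Ω → Matrix I I ℝ)
    (ε : ℝ) (X : Matrix p p ℝ) : Matrix I I ℝ :=
  matExp μ (fun ω => N ω + (A ω)ᵀ * X * A ω) - ε • 1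

variable [DecidableEq I] [IsFiniteMeasure μ] {A : Ω → Matrix p I ℝ} {N : Ω → Matrix I I ℝ}

lemma integrable_apply_of_moment (hN : Measurable N)
    (hmom : Integrable (fun ω => specNorm (N ω) ^ 2 + specNorm ((A ω)ᵀ * A ω) ^ 2) μ)
    (i j : I) : Integrable (fun ω => N ω i j) μ :=
  integrable_apply_of_specNorm_le hN ((integrable_const 1).add hmom) (fun ω => by
    dsimp only [Pi.add_apply]
    nlinarith [sq_nonneg (specNorm (N ω) - 1), sq_nonneg (specNorm ((A ω)ᵀ * A ω))]) i j

variable [DecidableEq p]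

lemma integrable_transpose_mul_mul_apply_of_moment (hA : Measurable A)
    (hmom : Integrable (fun ω => specNorm (N ω) ^ 2 + specNorm ((A ω)ᵀ * A ω) ^ 2) μ)
    (X : Matrix p p ℝ) (i j : I) : Integrable (fun ω => ((A ω)ᵀ * X * A ω) i j) μ :=
  integrable_apply_of_specNorm_le (measurable_transpose_mul_mul hA X)
    (((integrable_const 1).add hmom).const_mul (specNorm X)) (fun ω =>
      (specNorm_transpose_mul_mul_le _ _).trans <| mul_le_mul_of_nonneg_left (by
        dsimp only [Pi.add_apply]
        nlinarith [sq_nonneg (specNorm ((A ω)ᵀ * A ω) - 1), sq_nonneg (specNorm (N ω))])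
      (specNorm_nonneg X)) i j

lemma riccatiStep_posDef (hA : Measurable A) (hN : Measurable N)
    (hmom : Integrable (fun ω => specNorm (N ω) ^ 2 + specNorm ((A ω)ᵀ * A ω) ^ 2) μ)
    {ε₀ ε : ℝ} (hEN : loewnerLE (ε₀ • 1) (matExp μ N)) (hε : ε < ε₀) {X : Matrix p p ℝ}
    (hX : X.PosSemidef) : (riccatiStep μ A N ε X).PosDef := by
  refine posDef_sub_smul_one_of_loewnerLE (loewnerLE_trans hEN ?_) hε
  rw [matExp_add (integrable_apply_of_moment hN hmom)
    (integrable_transpose_mul_mul_apply_of_moment hA hmom X)]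
  refine loewnerLE_add_right (matExp_posSemidef (fun ω => ?_)
    (integrable_transpose_mul_mul_apply_of_moment hA hmom X))
  simpa only [conjTranspose_eq_transpose_of_trivial] using hX.conjTranspose_mul_mul_same (A ω)

lemma riccatiStep_mono (hA : Measurable A) (hN : Measurable N)
    (hmom : Integrable (fun ω => specNorm (N ω) ^ 2 + specNorm ((A ω)ᵀ * A ω) ^ 2) μ)
    (ε : ℝ) {X Y : Matrix p p ℝ} (hXY : loewnerLE X Y) :
    loewnerLE (riccatiStep μ A N ε X) (riccatiStep μ A N ε Y) := by
  have hint : ∀ (Z : Matrix p p ℝ) i j,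
      Integrable (fun ω => (N ω + (A ω)ᵀ * Z * A ω) i j) μ := fun Z i j =>
    (integrable_apply_of_moment hN hmom i j).add
      (integrable_transpose_mul_mul_apply_of_moment hA hmom Z i j)
  rw [loewnerLE, riccatiStep, riccatiStep, sub_sub_sub_cancel_right]
  refine matExp_mono (hint X) (hint Y) fun ω => ?_
  simpa only [loewnerLE, add_sub_add_left_eq_sub] using loewnerLE_transpose_mul_mul hXY (A ω)

end RiccatiOperator

theorem Lseq_monotone_general
    {n m : ℕ} {Ω : Type*} [MeasurableSpace Ω]
    (μpr : Measure Ω) [IsProbabilityMeasure μpr]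
    (A : ℕ → Ω → Matrix (Fin n) (Fin n ⊕ Fin m) ℝ)
    (N : ℕ → Ω → Matrix (Fin n ⊕ Fin m) (Fin n ⊕ Fin m) ℝ)
    (hmeas : ∀ t : ℕ, Measurable fun ω => (A (t + 1) ω, N (t + 1) ω))
    (hmom : Integrable
      (fun ω => specNorm (N 1 ω) ^ 2 + specNorm ((A 1 ω)ᵀ * A 1 ω) ^ 2) μpr)
    (ε₀ ε : ℝ)
    (hEN : loewnerLE (ε₀ • (1 : Matrix (Fin n ⊕ Fin m) (Fin n ⊕ Fin m) ℝ)) (matExp μpr (N 1)))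
    (hε : ε ∈ Set.Ioo 0 (ε₀ / 2)) :
    ∀ k : ℕ, loewnerLE (Lseq μpr A N ε k) (Lseq μpr A N ε (k + 1)) := by
  have hA : Measurable (A 1) := (hmeas 0).fst
  have hN : Measurable (N 1) := (hmeas 0).snd
  have hεε₀ : ε < ε₀ := by linarith [hε.1, hε.2]
  exact loewnerLE_succ_of_eq_piMap (fun _ => riccatiStep_posDef hA hN hmom hEN hεε₀)
    (fun _ _ => riccatiStep_mono hA hN hmom ε) rfl fun _ => rfl

/-- The lower-bound iteration is monotone increasing in the Loewner order. -/
theorem Lseq_monotone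
    {n m : ℕ} {Ω : Type*} [MeasurableSpace Ω]
    (μpr : Measure Ω) [IsProbabilityMeasure μpr]
    (A : ℕ → Ω → Matrix (Fin n) (Fin n ⊕ Fin m) ℝ)
    (N : ℕ → Ω → Matrix (Fin n ⊕ Fin m) (Fin n ⊕ Fin m) ℝ)
    (hmeas : ∀ t : ℕ, Measurable fun ω => (A (t + 1) ω, N (t + 1) ω))
    (hindep : ProbabilityTheory.iIndepFun
      (fun (t : ℕ) (ω : Ω) => (A (t + 1) ω, N (t + 1) ω)) μpr)
    (hident : ∀ t : ℕ, ProbabilityTheory.IdentDistrib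
      (fun ω => (A (t + 1) ω, N (t + 1) ω)) (fun ω => (A 1 ω, N 1 ω)) μpr μpr)
    (hNpsd : ∀ (t : ℕ) (ω : Ω), (N (t + 1) ω).PosSemidef)
    (hmom : Integrable
      (fun ω => specNorm (N 1 ω) ^ 2 + specNorm ((A 1 ω)ᵀ * A 1 ω) ^ 2) μpr)
    (hENpos : (matExp μpr (N 1)).PosDef)
    (ε₀ ε : ℝ) (hε₀ : 0 < ε₀)
    (hEN : loewnerLE (ε₀ • (1 : Matrix (Fin n ⊕ Fin m) (Fin n ⊕ Fin m) ℝ)) (matExp μpr (N 1)))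
    (hε : ε ∈ Set.Ioo 0 (ε₀ / 2)) :
    ∀ k : ℕ, loewnerLE (Lseq μpr A N ε k) (Lseq μpr A N ε (k + 1)) :=
  Lseq_monotone_general μpr A N hmeas hmom ε₀ ε hEN hε
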